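/- Let K be a field, let a,b,c,d ∈ K, set q = abcd, and assume 1 − q^j ≠ 0 for all 1 ≤ j ≤ N. Then Ψ_{2N+1}(a,b,c,d;1) = Σ_{k=0}^{N} [N choose k]_q · (−a;q)_{k+1} · (−c;q)_{N−k} · (ab)^{N−k}. -/

import Mathlib

open scoped BigOperators

/-- A partition: a weakly decreasing sequence of nonnegative integers (0-indexed:
`parts i` is λ_{i+1}) with finitely many nonzero terms. -/
structure IntPartition where
  parts : ℕ → ℕ
  antitone : Antitone parts
  fin_support : ∃ N, ∀ n, N ≤ n → parts n = 0

namespace IntPartition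

/-- Σ_{i≥1} ⌈λ_{2i-1}/2⌉ (odd-indexed rows, 1-based; ceiling). -/
noncomputable def statA (l : IntPartition) : ℕ := ∑ᶠ i : ℕ, (l.parts (2 * i) + 1) / 2
/-- Σ_{i≥1} ⌊λ_{2i-1}/2⌋. -/
noncomputable def statB (l : IntPartition) : ℕ := ∑ᶠ i : ℕ, l.parts (2 * i) / 2
/-- Σ_{i≥1} ⌈λ_{2i}/2⌉. -/
noncomputable def statC (l : IntPartition) : ℕ := ∑ᶠ i : ℕ, (l.parts (2 * i + 1) + 1) / 2
/-- Σ_{i≥1} ⌊λ_{2i}/2⌋. -/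
noncomputable def statD (l : IntPartition) : ℕ := ∑ᶠ i : ℕ, l.parts (2 * i + 1) / 2

/-- ℓ(λ): the number of nonzero parts. -/
noncomputable def length (l : IntPartition) : ℕ := Set.ncard (Function.support l.parts)

/-- |λ|: the sum of all parts. -/
noncomputable def size (l : IntPartition) : ℕ := ∑ᶠ i : ℕ, l.parts i

/-- A partition is strict if its nonzero parts are pairwise distinct. -/
def Strict (l : IntPartition) : Prop := ∀ i, l.parts (i + 1) ≠ 0 → l.parts (i + 1) < l.parts i

/-- The Andrews–Stanley four-parameter weight ω(λ). -/
noncomputable def weight {R : Type*} [CommRing R] (a b c d : R) (l : IntPartition) : R :=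
  a ^ l.statA * b ^ l.statB * c ^ l.statC * d ^ l.statD

/-- O(λ): the number of odd parts. -/
noncomputable def oddParts (l : IntPartition) : ℕ := Set.ncard {i : ℕ | Odd (l.parts i)}

/-- O(λ'): the number of odd parts of the conjugate partition. -/
noncomputable def conjOddParts (l : IntPartition) : ℕ :=
  Set.ncard {j : ℕ | Odd (Set.ncard {i : ℕ | j + 1 ≤ l.parts i})}

end IntPartition

/-- The q-shifted factorial (x;q)_n. -/
def poch {R : Type*} [CommRing R] (x q : R) (n : ℕ) : R :=
  ∏ k ∈ Finset.range n, (1 - x * q ^ k)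

/-- The infinite q-shifted factorial (x;q)_∞ (as an infinite product of reals). -/
noncomputable def pochInf (x q : ℝ) : ℝ := ∏' k : ℕ, (1 - x * q ^ k)

/-- The basic hypergeometric series ₂φ₁(α,β;γ;q,w). -/
noncomputable def phi21 (α β γ q w : ℝ) : ℝ :=
  ∑' n : ℕ, poch α q n * poch β q n / (poch q q n * poch γ q n) * w ^ n

/-- Absolute convergence of the ₂φ₁ series. -/
def phi21Summable (α β γ q w : ℝ) : Prop :=
  Summable (fun n : ℕ => poch α q n * poch β q n / (poch q q n * poch γ q n) * w ^ n)

/-- The Gaussian binomial coefficient [N choose k]_q. -/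
noncomputable def gauss {K : Type*} [Field K] (q : K) (N k : ℕ) : K :=
  poch q q N / (poch q q k * poch q q (N - k))

/-- Ψ_N(a,b,c,d;z): the generating function of strict partitions with parts ≤ N. -/
noncomputable def Psi {R : Type*} [CommRing R] (a b c d z : R) (N : ℕ) : R :=
  ∑ᶠ μ : {μ : IntPartition // μ.Strict ∧ μ.parts 0 ≤ N},
    IntPartition.weight a b c d μ.1 * z ^ μ.1.length

/-! Removing the largest part `M + 1` from a strict partition moves every remaining part up one
row, which exchanges the roles of `(a, b)` and `(c, d)` in the weight. Hence
`Ψ_{M+1}(a,b,c,d) = Ψ_M(a,b,c,d) + z a^⌈(M+1)/2⌉ b^⌊(M+1)/2⌋ Ψ_M(c,d,a,b)`, and two steps of this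
express `Ψ_{2N+3}` through `Ψ_{2N+1}(a,b,c,d)` and `Ψ_{2N+1}(c,d,a,b)`. The right-hand side obeys
the same recurrence: after the `q`-Pascal rule, the difference of the two sides telescopes. -/

open Finset

lemma finsum_nat_eq_zero_add {M : Type*} [AddCommMonoid M] {f : ℕ → M}
    (hf : (Function.support f).Finite) : ∑ᶠ i, f i = f 0 + ∑ᶠ i, f (i + 1) := by
  obtain ⟨B, hB⟩ := hf.bddAbove
  have hlt : ∀ i ∈ Function.support f, i < B + 1 := fun i hi => Nat.lt_succ_of_le (hB hi)
  rw [finsum_eq_finsetSum_of_support_subset f (s := range (B + 1))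
      fun i hi => by simpa using hlt i hi,
    finsum_eq_finsetSum_of_support_subset (fun i => f (i + 1)) (s := range B)
      fun i hi => by simpa using hlt (i + 1) hi, sum_range_succ', add_comm]

namespace IntPartition

attribute [ext] IntPartition

def nil : IntPartition := ⟨fun _ => 0, fun _ _ _ => le_rfl, ⟨0, fun _ _ => rfl⟩⟩

def tail (μ : IntPartition) : IntPartition where
  parts n := μ.parts (n + 1)
  antitone _ _ hmn := μ.antitone (Nat.succ_le_succ hmn)
  fin_support := let ⟨B, hB⟩ := μ.fin_support; ⟨B, fun n hn => hB _ (by omega)⟩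

def cons (x : ℕ) (ν : IntPartition) (hx : ν.parts 0 ≤ x) : IntPartition where
  parts
    | 0 => x
    | n + 1 => ν.parts n
  antitone := antitone_nat_of_succ_le fun
    | 0 => hx
    | n + 1 => ν.antitone n.le_succ
  fin_support := let ⟨B, hB⟩ := ν.fin_support; ⟨B + 1, fun
    | 0, h => by omega
    | n + 1, h => hB n (by omega)⟩

lemma eq_nil_of_parts_zero {μ : IntPartition} (h : μ.parts 0 = 0) : μ = nil := by
  ext n
  exact Nat.eq_zero_of_le_zero (h ▸ μ.antitone n.zero_le)

lemma cons_tail (μ : IntPartition) {x : ℕ} (hx : μ.parts 0 = x) :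
    cons x μ.tail (hx ▸ μ.antitone (Nat.zero_le 1)) = μ := by
  subst hx
  ext (_ | _) <;> rfl

lemma finite_support_parts_comp (μ : IntPartition) {g : ℕ → ℕ} (hg : g 0 = 0) {φ : ℕ → ℕ}
    (hφ : ∀ i, i ≤ φ i) : (Function.support fun i => g (μ.parts (φ i))).Finite := by
  obtain ⟨B, hB⟩ := μ.fin_support
  refine (Set.finite_Iio B).subset fun i hi => ?_
  by_contra hiB
  exact hi (show g (μ.parts (φ i)) = 0 by rw [hB _ ((not_lt.1 hiB).trans (hφ i)), hg])

section Cons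

variable {x : ℕ} {ν : IntPartition} (hx : ν.parts 0 ≤ x)

lemma statA_cons : (cons x ν hx).statA = (x + 1) / 2 + ν.statC :=
  finsum_nat_eq_zero_add <|
    finite_support_parts_comp _ (g := fun n => (n + 1) / 2) rfl (φ := (2 * ·)) fun i => by omega

lemma statB_cons : (cons x ν hx).statB = x / 2 + ν.statD :=
  finsum_nat_eq_zero_add <|
    finite_support_parts_comp _ (g := (· / 2)) rfl (φ := (2 * ·)) fun i => by omega

lemma statC_cons : (cons x ν hx).statC = ν.statA := rfl

lemma statD_cons : (cons x ν hx).statD = ν.statB := rfl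

lemma weight_cons {R : Type*} [CommRing R] (a b c d : R) :
    weight a b c d (cons x ν hx) = a ^ ((x + 1) / 2) * b ^ (x / 2) * weight c d a b ν := by
  rw [weight, weight, statA_cons, statB_cons, statC_cons, statD_cons, pow_add, pow_add]
  ring

end Cons

lemma length_cons {x : ℕ} {ν : IntPartition} (hx : ν.parts 0 ≤ x) (hx₀ : 0 < x) :
    (cons x ν hx).length = ν.length + 1 := by
  have hsupp : Function.support (cons x ν hx).parts =
      insert 0 (Nat.succ '' Function.support ν.parts) := by
    ext (_ | n)
    · simpa [cons] using hx₀.ne'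
    · simp [cons]
  have hfin : (Function.support ν.parts).Finite :=
    finite_support_parts_comp ν (g := id) rfl (φ := id) le_refl
  rw [length, length, hsupp, Set.ncard_insert_of_notMem (by simp) (hfin.image _),
    Set.ncard_image_of_injective _ Nat.succ_injective]

lemma Strict.tail {μ : IntPartition} (h : μ.Strict) : μ.tail.Strict := fun i => h (i + 1)

lemma strict_cons {x : ℕ} {ν : IntPartition} (hν : ν.Strict) (hx : ν.parts 0 < x) :
    (cons x ν hx.le).Strict
  | 0, _ => hx
  | i + 1, hi => hν i hi

lemma Strict.parts_one_le {μ : IntPartition} (h : μ.Strict) {M : ℕ} (hM : μ.parts 0 ≤ M + 1) :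
    μ.parts 1 ≤ M := by
  have : μ.parts 1 ≠ 0 → μ.parts 1 < μ.parts 0 := h 0
  omega

abbrev StrictBounded (M : ℕ) := {μ : IntPartition // μ.Strict ∧ μ.parts 0 ≤ M}

instance : Unique (StrictBounded 0) where
  default := ⟨nil, fun _ h => absurd rfl h, le_rfl⟩
  uniq μ := Subtype.ext (eq_nil_of_parts_zero (Nat.eq_zero_of_le_zero μ.2.2))

def strictBoundedSuccEquiv (M : ℕ) :
    StrictBounded M ⊕ StrictBounded M ≃ StrictBounded (M + 1) where
  toFun := Sum.elim (fun ν => ⟨ν.1, ν.2.1, ν.2.2.trans M.le_succ⟩)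
    fun ν => ⟨cons (M + 1) ν.1 _, strict_cons ν.2.1 (Nat.lt_succ_of_le ν.2.2), le_rfl⟩
  invFun μ := if hμ : μ.1.parts 0 ≤ M then .inl ⟨μ.1, μ.2.1, hμ⟩
    else .inr ⟨μ.1.tail, μ.2.1.tail, μ.2.1.parts_one_le μ.2.2⟩
  left_inv
    | .inl ν => dif_pos ν.2.2
    | .inr ν => dif_neg (show ¬M + 1 ≤ M by omega)
  right_inv μ := by
    by_cases hμ : μ.1.parts 0 ≤ M
    · simp only [dif_pos hμ, Sum.elim_inl]
    · have : μ.1.parts 0 = M + 1 := by have := μ.2.2; omega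
      simp only [dif_neg hμ, Sum.elim_inr]
      exact Subtype.ext (cons_tail μ.1 this)

instance finite_strictBounded : ∀ M, Finite (StrictBounded M)
  | 0 => inferInstance
  | M + 1 => have := finite_strictBounded M; .of_equiv _ (strictBoundedSuccEquiv M)

end IntPartition

open IntPartition

section Psi

variable {R : Type*} [CommRing R]

lemma Psi_zero (a b c d z : R) : Psi a b c d z 0 = 1 := by
  rw [Psi, finsum_unique]
  simp [default, weight, statA, statB, statC, statD, length, nil]

lemma Psi_succ (a b c d z : R) (M : ℕ) :
    Psi a b c d z (M + 1) =
      Psi a b c d z M + z * a ^ ((M + 2) / 2) * b ^ ((M + 1) / 2) * Psi c d a b z M := by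
  have := Fintype.ofFinite (StrictBounded M)
  have := Fintype.ofFinite (StrictBounded (M + 1))
  simp only [Psi, finsum_eq_sum_of_fintype]
  rw [← (strictBoundedSuccEquiv M).sum_comp, Fintype.sum_sum_type, mul_sum]
  congr 1
  refine sum_congr rfl fun ν _ => ?_
  simp only [strictBoundedSuccEquiv, Equiv.coe_fn_mk, Sum.elim_inr, weight_cons,
    length_cons _ M.succ_pos, pow_succ]
  ring

lemma Psi_two_mul_add_three (a b c d z : R) (N : ℕ) :
    Psi a b c d z (2 * N + 3) =
      (1 + z ^ 2 * a * (a * b * c * d) ^ (N + 1)) * Psi a b c d z (2 * N + 1)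
        + z * (1 + a) * (a * b) ^ (N + 1) * Psi c d a b z (2 * N + 1) := by
  rw [Psi_succ a b c d z (2 * N + 2), Psi_succ a b c d z (2 * N + 1),
    Psi_succ c d a b z (2 * N + 1),
    show (2 * N + 2 + 2) / 2 = N + 2 by omega, show (2 * N + 2 + 1) / 2 = N + 1 by omega,
    show (2 * N + 1 + 1) / 2 = N + 1 by omega]
  ring

end Psi

lemma poch_zero {R : Type*} [CommRing R] (x q : R) : poch x q 0 = 1 :=
  prod_range_zero _

lemma poch_succ {R : Type*} [CommRing R] (x q : R) (n : ℕ) :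
    poch x q (n + 1) = poch x q n * (1 - x * q ^ n) :=
  prod_range_succ _ _

section QBinomial

variable {K : Type*} [Field K] {q : K} {N : ℕ}

lemma poch_self_ne_zero (h : ∀ j, 1 ≤ j → j ≤ N → (1 : K) - q ^ j ≠ 0) {n : ℕ} (hn : n ≤ N) :
    poch q q n ≠ 0 :=
  prod_ne_zero_iff.2 fun k hk => by
    rw [← pow_succ']
    exact h (k + 1) le_add_self (by have := mem_range.1 hk; omega)

lemma gauss_zero_right (hN : poch q q N ≠ 0) : gauss q N 0 = 1 := by
  rw [gauss, Nat.sub_zero, poch_zero, one_mul, div_self hN]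

lemma gauss_self (hN : poch q q N ≠ 0) : gauss q N N = 1 := by
  rw [gauss, Nat.sub_self, poch_zero, mul_one, div_self hN]

lemma gauss_sub {k : ℕ} (hk : k ≤ N) : gauss q N (N - k) = gauss q N k := by
  rw [gauss, gauss, Nat.sub_sub_self hk, mul_comm]

lemma one_sub_pow_mul_gauss_succ (h : ∀ j, 1 ≤ j → j ≤ N → (1 : K) - q ^ j ≠ 0) {k : ℕ}
    (hk : k < N) : (1 - q ^ (k + 1)) * gauss q N (k + 1) = (1 - q ^ (N - k)) * gauss q N k := by
  obtain ⟨m, hm⟩ : ∃ m, N - k = m + 1 := ⟨N - k - 1, by omega⟩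
  have hk' := poch_self_ne_zero h hk.le
  have hm' := poch_self_ne_zero h (show m ≤ N by omega)
  rw [gauss, gauss, hm, show N - (k + 1) = m by omega, poch_succ q q k, poch_succ q q m,
    ← pow_succ', ← pow_succ']
  have hk1 := h (k + 1) le_add_self (by omega)
  have hm1 := h (m + 1) le_add_self (by omega)
  field_simp

lemma gauss_succ_succ (h : ∀ j, 1 ≤ j → j ≤ N + 1 → (1 : K) - q ^ j ≠ 0) {k : ℕ} (hk : k < N) :
    gauss q (N + 1) (k + 1) = q ^ (k + 1) * gauss q N (k + 1) + gauss q N k := by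
  obtain ⟨m, rfl⟩ : ∃ m, N = k + m + 1 := ⟨N - k - 1, by omega⟩
  have hk' := poch_self_ne_zero h (show k ≤ k + m + 1 + 1 by omega)
  have hm' := poch_self_ne_zero h (show m ≤ k + m + 1 + 1 by omega)
  rw [gauss, gauss, gauss, show k + m + 1 + 1 - (k + 1) = m + 1 by omega,
    show k + m + 1 - (k + 1) = m by omega, show k + m + 1 - k = m + 1 by omega,
    poch_succ q q (k + m + 1), poch_succ q q k, poch_succ q q m, ← pow_succ', ← pow_succ',
    ← pow_succ']
  have hk1 := h (k + 1) le_add_self (by omega)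
  have hm1 := h (m + 1) le_add_self (by omega)
  field_simp
  ring

lemma sum_range_gauss_succ_mul (h : ∀ j, 1 ≤ j → j ≤ N + 1 → (1 : K) - q ^ j ≠ 0) (f : ℕ → K) :
    ∑ k ∈ range (N + 2), gauss q (N + 1) k * f k =
      ∑ k ∈ range (N + 1), gauss q N k * (q ^ k * f k + f (k + 1)) := by
  have hN := poch_self_ne_zero (N := N) (fun j hj hjN => h j hj (by omega)) le_rfl
  have hN1 := poch_self_ne_zero h le_rfl
  simp only [mul_add, sum_add_distrib]
  rw [sum_range_succ', sum_range_succ, sum_range_succ', sum_range_succ (fun k => _ * f (k + 1)),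
    gauss_zero_right hN, gauss_zero_right hN1, gauss_self hN, gauss_self hN1,
    sum_congr rfl fun k hk => by rw [gauss_succ_succ h (mem_range.1 hk)]]
  simp only [add_mul, sum_add_distrib]
  ring_nf

end QBinomial

lemma sum_range_succ_sub_eq_zero {M : Type*} [AddCommGroup M] (f g : ℕ → M) (n : ℕ)
    (hf : f n = 0) (hg : g 0 = 0) (hfg : ∀ k < n, g (k + 1) = f k) :
    ∑ k ∈ range (n + 1), (f k - g k) = 0 := by
  rw [sum_sub_distrib, sum_range_succ, sum_range_succ', hf, hg,
    sum_congr rfl fun k hk => hfg k (mem_range.1 hk)]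
  simp

section OddGaussSum

variable {K : Type*} [Field K]

noncomputable def oddGaussSum (a b c q : K) (N : ℕ) : K :=
  ∑ k ∈ range (N + 1), gauss q N k * poch (-a) q (k + 1) * poch (-c) q (N - k) * (a * b) ^ (N - k)

lemma oddGaussSum_eq_sum_reflect (a b c q : K) (N : ℕ) :
    oddGaussSum a b c q N =
      ∑ k ∈ range (N + 1), gauss q N k * poch (-a) q (N - k + 1) * poch (-c) q k * (a * b) ^ k := by
  rw [oddGaussSum, ← sum_range_reflect]
  refine sum_congr rfl fun k hk => ?_
  have hk : k ≤ N := Nat.lt_succ_iff.1 (mem_range.1 hk)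
  rw [Nat.add_sub_cancel, gauss_sub hk, Nat.sub_sub_self hk]

theorem oddGaussSum_succ {a b c d q : K} (hq : q = a * b * c * d) {N : ℕ}
    (h : ∀ j, 1 ≤ j → j ≤ N + 1 → (1 : K) - q ^ j ≠ 0) :
    oddGaussSum a b c q (N + 1) =
      (1 + a * q ^ (N + 1)) * oddGaussSum a b c q N
        + (1 + a) * (a * b) ^ (N + 1) * oddGaussSum c d a q N := by
  set A := poch (-a) q
  set C := poch (-c) q
  have hpascal : oddGaussSum a b c q (N + 1) = ∑ k ∈ range (N + 1), gauss q N k *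
      (q ^ k * (A (k + 1) * C (N + 1 - k) * (a * b) ^ (N + 1 - k))
        + A (k + 2) * C (N - k) * (a * b) ^ (N - k)) := by
    simp only [oddGaussSum, mul_assoc]
    refine (sum_range_gauss_succ_mul h fun k => A (k + 1) * (C (N + 1 - k) * _)).trans ?_
    simp only [Nat.add_sub_add_right]
  let s k :=
    a * q ^ (k + 1) * (1 - q ^ (N - k)) * gauss q N k * A (k + 1) * C (N - k) * (a * b) ^ (N - k)
  let t k :=
    a * q ^ k * (1 - q ^ k) * gauss q N k * A k * C (N - k + 1) * (a * b) ^ (N - k + 1)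
  have hterm : ∀ k ∈ range (N + 1), gauss q N k *
      (q ^ k * (A (k + 1) * C (N + 1 - k) * (a * b) ^ (N + 1 - k))
        + A (k + 2) * C (N - k) * (a * b) ^ (N - k))
      - ((1 + a * q ^ (N + 1)) * (gauss q N k * A (k + 1) * C (N - k) * (a * b) ^ (N - k))
        + (1 + a) * (a * b) ^ (N + 1) * (gauss q N k * C (N - k + 1) * A k * (c * d) ^ k))
      = s k - t k := by
    intro k hk
    obtain ⟨m, rfl⟩ : ∃ m, N = k + m := ⟨N - k, by have := mem_range.1 hk; omega⟩
    simp only [s, t, A, C, show k + m + 1 - k = m + 1 by omega, Nat.add_sub_cancel_left,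
      poch_succ, pow_add, hq]
    ring
  rw [hpascal, oddGaussSum, oddGaussSum_eq_sum_reflect c d a, ← sub_eq_zero, mul_sum, mul_sum,
    ← sum_add_distrib, ← sum_sub_distrib, sum_congr rfl hterm]
  refine sum_range_succ_sub_eq_zero s t N (by simp [s]) (by simp [t]) fun k hk => ?_
  have hgauss := one_sub_pow_mul_gauss_succ (fun j hj hjN => h j hj (by omega)) hk
  simp only [s, t, show N - (k + 1) + 1 = N - k by omega]
  linear_combination a * q ^ (k + 1) * A (k + 1) * C (N - k) * (a * b) ^ (N - k) * hgauss

end OddGaussSum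

theorem psi_odd_gauss {K : Type*} [Field K] (a b c d q : K) (N : ℕ)
    (hq : q = a * b * c * d) (h : ∀ j, 1 ≤ j → j ≤ N → (1 : K) - q ^ j ≠ 0) :
    Psi a b c d 1 (2 * N + 1) =
      ∑ k ∈ Finset.range (N + 1),
        gauss q N k * poch (-a) q (k + 1) * poch (-c) q (N - k) * (a * b) ^ (N - k) := by
  show _ = oddGaussSum a b c q N
  induction N generalizing a b c d with
  | zero =>
    rw [Psi_succ, Psi_zero, Psi_zero]
    simp [oddGaussSum, gauss, poch]
  | succ N ih =>
    have h' : ∀ j, 1 ≤ j → j ≤ N → (1 : K) - q ^ j ≠ 0 := fun j hj hjN => h j hj (by omega)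
    rw [show 2 * (N + 1) + 1 = 2 * N + 3 by ring, Psi_two_mul_add_three, ih a b c d hq h',
      ih c d a b (by rw [hq]; ring) h', oddGaussSum_succ hq h, hq]
    ring
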